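/- Let S, φ : ℂ → Matrix (Fin N) (Fin N) ℂ be twice continuously real-differentiable with S(z) invertible for every z. Define A_{z̄} := −i·S⁻¹·∂_{z̄}S, A_z := i·∂_z(Sᴴ)·(Sᴴ)⁻¹, the gauge invariants Ω := S·Sᴴ and Υ := S·φ·S⁻¹, and the adjoint covariant derivatives D_{z̄}φ := ∂_{z̄}φ + i·[A_{z̄}, φ] and D_zX := ∂_zX + i·[A_z, X]. Then pointwise D_z(D_{z̄}φ) = S⁻¹·( ∂_z(∂_{z̄}Υ) + [∂_{z̄}Υ, (∂_zΩ)·Ω⁻¹] )·S. -/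

import Mathlib

open Matrix Complex

attribute [local instance] Matrix.frobeniusNormedAddCommGroup Matrix.frobeniusNormedSpace

/-- The Wirtinger derivative `∂_z f (w) = (1/2)(Df(w)[1] − i·Df(w)[i])`. -/
noncomputable def dz {E : Type*} [NormedAddCommGroup E] [NormedSpace ℂ E]
    (f : ℂ → E) (w : ℂ) : E :=
  (2 : ℂ)⁻¹ • (fderiv ℝ f w 1 - Complex.I • fderiv ℝ f w Complex.I)

/-- The Wirtinger derivative `∂_{z̄} f (w) = (1/2)(Df(w)[1] + i·Df(w)[i])`. -/
noncomputable def dzbar {E : Type*} [NormedAddCommGroup E] [NormedSpace ℂ E]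
    (f : ℂ → E) (w : ℂ) : E :=
  (2 : ℂ)⁻¹ • (fderiv ℝ f w 1 + Complex.I • fderiv ℝ f w Complex.I)

/-!
Both Wirtinger derivatives satisfy the Leibniz rule, and hence
`S⁻¹ δ(S X S⁻¹) S = δX + [S⁻¹ δS, X]`. For `δ = ∂_{z̄}` and `X = φ` this says that the
covariant derivative is the conjugate of an ordinary one, `D_{z̄}φ = S⁻¹ (∂_{z̄}Υ) S`.
Differentiating `S⁻¹ Y S` with `Y = ∂_{z̄}Υ` produces the commutator of `Y` with `∂_z S · S⁻¹`,
and the connection `A_z` contributes the commutator with `S (∂_z Sᴴ · (Sᴴ)⁻¹) S⁻¹`. By the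
Leibniz rule these two terms add up to the logarithmic derivative `∂_zΩ · Ω⁻¹` of `Ω = S Sᴴ`.
-/

open scoped Ring

attribute [local instance] Matrix.frobeniusNormedRing Matrix.frobeniusNormedAlgebra
  LieRing.ofAssociativeRing

section Wirtinger

variable {E : Type*} [NormedAddCommGroup E] [NormedSpace ℂ E]

noncomputable def wirtingerDeriv (ε : ℂ) (f : ℂ → E) (z : ℂ) : E :=
  (2 : ℂ)⁻¹ • (fderiv ℝ f z 1 + ε • fderiv ℝ f z I)

theorem dz_eq_wirtingerDeriv (f : ℂ → E) : dz f = wirtingerDeriv (-I) f := by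
  funext z
  simp only [dz, wirtingerDeriv, neg_smul, sub_eq_add_neg]

theorem dzbar_eq_wirtingerDeriv (f : ℂ → E) : dzbar f = wirtingerDeriv I f :=
  rfl

theorem ContDiffAt.differentiableAt_wirtingerDeriv {f : ℂ → E} {z : ℂ}
    (hf : ContDiffAt ℝ 2 f z) (ε : ℂ) : DifferentiableAt ℝ (wirtingerDeriv ε f) z := by
  have hf' : ContDiffAt ℝ 1 (fderiv ℝ f) z := hf.fderiv_right (by norm_num)
  have hdir (v : ℂ) : DifferentiableAt ℝ (fun w => fderiv ℝ f w v) z :=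
    (hf'.clm_apply contDiffAt_const).differentiableAt one_ne_zero
  exact ((hdir 1).add ((hdir I).const_smul ε)).const_smul (2 : ℂ)⁻¹

end Wirtinger

theorem ContDiffAt.ringInverse {𝕜 E R : Type*} [NontriviallyNormedField 𝕜]
    [NormedAddCommGroup E] [NormedSpace 𝕜 E] [NormedRing R] [NormedAlgebra 𝕜 R]
    [HasSummableGeomSeries R] {n : WithTop ℕ∞} {f : E → R} {x : E} (hf : ContDiffAt 𝕜 n f x)
    (hx : IsUnit (f x)) : ContDiffAt 𝕜 n (fun y => (f y)⁻¹ʳ) x :=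
  (contDiffAt_ringInverse 𝕜 hx.unit).comp x hf

theorem lie_conj_of_mul_eq_one {R : Type*} [Ring R] {s t : R} (h : t * s = 1) (b x : R) :
    ⁅b, t * x * s⁆ = t * ⁅s * b * t, x⁆ * s := by
  have hcancel (y : R) : t * (s * y) = y := by rw [← mul_assoc, h, one_mul]
  simp only [Ring.lie_def, mul_sub, sub_mul, mul_assoc, hcancel, h, mul_one]

section NormedAlgebra

variable {A : Type*} [NormedRing A] [NormedAlgebra ℂ A] {ε z : ℂ} {f g S X : ℂ → A}

theorem wirtingerDeriv_mul (hf : DifferentiableAt ℝ f z) (hg : DifferentiableAt ℝ g z) :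
    wirtingerDeriv ε (fun w => f w * g w) z
      = wirtingerDeriv ε f z * g z + f z * wirtingerDeriv ε g z := by
  simp only [wirtingerDeriv, fderiv_fun_mul' hf hg, _root_.add_apply, _root_.smul_apply,
    smul_eq_mul, op_smul_eq_mul, smul_mul_assoc, mul_smul_comm, smul_add, add_mul, mul_add]
  abel

theorem wirtingerDeriv_mul_mul_ringInverse_mul_ringInverse (hf : DifferentiableAt ℝ f z)
    (hg : DifferentiableAt ℝ g z) (hu : IsUnit (g z)) :
    wirtingerDeriv ε (fun w => f w * g w) z * ((g z)⁻¹ʳ * (f z)⁻¹ʳ)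
      = wirtingerDeriv ε f z * (f z)⁻¹ʳ
        + f z * (wirtingerDeriv ε g z * (g z)⁻¹ʳ) * (f z)⁻¹ʳ := by
  simp only [wirtingerDeriv_mul hf hg, add_mul, mul_assoc, Ring.mul_inverse_cancel_left _ _ hu]

variable [HasSummableGeomSeries A]

theorem wirtingerDeriv_ringInverse (hS : DifferentiableAt ℝ S z) (hu : IsUnit (S z)) :
    wirtingerDeriv ε (fun w => (S w)⁻¹ʳ) z
      = -((S z)⁻¹ʳ * wirtingerDeriv ε S z * (S z)⁻¹ʳ) := by
  obtain ⟨u, hu⟩ := hu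
  have hderiv : fderiv ℝ (fun w => (S w)⁻¹ʳ) z
      = (-ContinuousLinearMap.mulLeftRight ℝ A ↑u⁻¹ ↑u⁻¹).comp (fderiv ℝ S z) :=
    ((hu ▸ hasFDerivAt_ringInverse u).comp z hS.hasFDerivAt).fderiv
  simp only [wirtingerDeriv, hderiv, ← hu, Ring.inverse_unit, ContinuousLinearMap.comp_apply,
    _root_.neg_apply, ContinuousLinearMap.mulLeftRight_apply, smul_neg, ← neg_add,
    mul_smul_comm, smul_mul_assoc, mul_add, add_mul]

theorem ringInverse_mul_wirtingerDeriv_conj_mul (hS : DifferentiableAt ℝ S z)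
    (hX : DifferentiableAt ℝ X z) (hu : IsUnit (S z)) :
    (S z)⁻¹ʳ * wirtingerDeriv ε (fun w => S w * X w * (S w)⁻¹ʳ) z * S z
      = wirtingerDeriv ε X z + ⁅(S z)⁻¹ʳ * wirtingerDeriv ε S z, X z⁆ := by
  rw [wirtingerDeriv_mul (f := fun w => S w * X w) (hS.mul hX) (hS.inverse hu),
    wirtingerDeriv_mul hS hX, wirtingerDeriv_ringInverse hS hu, Ring.lie_def]
  simp only [mul_add, add_mul, mul_neg, neg_mul, mul_assoc, Ring.inverse_mul_cancel_left _ _ hu,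
    Ring.inverse_mul_cancel _ hu, mul_one]
  abel

theorem wirtingerDeriv_conj_ringInverse (hS : DifferentiableAt ℝ S z)
    (hX : DifferentiableAt ℝ X z) (hu : IsUnit (S z)) :
    wirtingerDeriv ε (fun w => (S w)⁻¹ʳ * X w * S w) z
      = (S z)⁻¹ʳ * (wirtingerDeriv ε X z - ⁅wirtingerDeriv ε S z * (S z)⁻¹ʳ, X z⁆) * S z := by
  rw [wirtingerDeriv_mul (f := fun w => (S w)⁻¹ʳ * X w) ((hS.inverse hu).mul hX) hS,
    wirtingerDeriv_mul (hS.inverse hu) hX, wirtingerDeriv_ringInverse hS hu, Ring.lie_def]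
  simp only [add_mul, mul_sub, sub_mul, neg_mul, mul_assoc, Ring.inverse_mul_cancel _ hu,
    mul_one]
  abel

end NormedAlgebra

/-- The covariant Laplacian of the adjoint scalar field in terms of the moduli-matrix
gauge invariants `Ω = SSᴴ` and `Υ = SφS⁻¹`:
`D_z(D_{z̄}φ) = S⁻¹·(∂_z∂_{z̄}Υ + [∂_{z̄}Υ, (∂_zΩ)·Ω⁻¹])·S`, where
`A_{z̄} = −i·S⁻¹·∂_{z̄}S`, `A_z = i·∂_z(Sᴴ)·(Sᴴ)⁻¹`, `D_{z̄}φ = ∂_{z̄}φ + i[A_{z̄},φ]`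
and `D_zX = ∂_zX + i[A_z,X]`. -/
theorem covariant_laplacian_moduli_matrix (N : ℕ)
    (S φ : ℂ → Matrix (Fin N) (Fin N) ℂ)
    (hS : ContDiff ℝ 2 S) (hφ : ContDiff ℝ 2 φ)
    (hSinv : ∀ z : ℂ, IsUnit (S z))
    (Azbar Az Ω Υ Dzbarφ : ℂ → Matrix (Fin N) (Fin N) ℂ)
    (hAzbar : ∀ z, Azbar z = -Complex.I • ((S z)⁻¹ * dzbar S z))
    (hAz : ∀ z, Az z = Complex.I • (dz (fun w => (S w)ᴴ) z * ((S z)ᴴ)⁻¹))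
    (hΩ : ∀ z, Ω z = S z * (S z)ᴴ)
    (hΥ : ∀ z, Υ z = S z * φ z * (S z)⁻¹)
    (hDzbarφ : ∀ z, Dzbarφ z = dzbar φ z + Complex.I • (Azbar z * φ z - φ z * Azbar z)) :
    ∀ z : ℂ, dz Dzbarφ z + Complex.I • (Az z * Dzbarφ z - Dzbarφ z * Az z)
      = (S z)⁻¹ * (dz (fun w => dzbar Υ w) z
          + (dzbar Υ z * (dz Ω z * (Ω z)⁻¹) - (dz Ω z * (Ω z)⁻¹) * dzbar Υ z)) * S z := by
  intro z
  have hSd : Differentiable ℝ S := hS.differentiable (by norm_num)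
  have hcov (w : ℂ) : Dzbarφ w = (S w)⁻¹ * dzbar Υ w * S w := by
    simp only [hDzbarφ, hAzbar, funext hΥ, Matrix.nonsing_inv_eq_ringInverse,
      dzbar_eq_wirtingerDeriv, ← Ring.lie_def]
    rw [ringInverse_mul_wirtingerDeriv_conj_mul (hSd w) (hφ.differentiable (by norm_num) w)
      (hSinv w), smul_lie, smul_smul, mul_neg, I_mul_I, neg_neg, one_smul]
  have hX : DifferentiableAt ℝ (dzbar Υ) z := by
    simp only [funext hΥ, dzbar_eq_wirtingerDeriv, Matrix.nonsing_inv_eq_ringInverse]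
    exact ((hS.contDiffAt.mul hφ.contDiffAt).mul
      (hS.contDiffAt.ringInverse (hSinv z))).differentiableAt_wirtingerDeriv I
  have hSH : IsUnit (S z)ᴴ := (Matrix.isUnit_conjTranspose _).mpr (hSinv z)
  have hSHd : DifferentiableAt ℝ (fun w => (S w)ᴴ) z := (hSd z).star
  rw [funext hcov, funext hΩ, Matrix.mul_inv_rev, hAz]
  simp only [Matrix.nonsing_inv_eq_ringInverse, ← Ring.lie_def, dz_eq_wirtingerDeriv,
    dzbar_eq_wirtingerDeriv] at hX ⊢
  rw [wirtingerDeriv_conj_ringInverse (hSd z) hX (hSinv z),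
    wirtingerDeriv_mul_mul_ringInverse_mul_ringInverse (hSd z) hSHd hSH, smul_lie, smul_smul,
    I_mul_I, neg_one_smul, lie_conj_of_mul_eq_one (Ring.inverse_mul_cancel _ (hSinv z)),
    ← lie_skew (wirtingerDeriv I Υ z), add_lie]
  noncomm_ring
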